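/- Let $h : \mathbb{R}^d \to \mathbb{R}$ be convex and strongly convex with modulus $\beta > 0$ on a bounded set containing $\omega_1 - \omega_0$, where $\omega_0, \omega_1 \subset \mathbb{R}^d$ are compact and $\omega_1$ is convex. Let $\psi \in C^1$ on a neighborhood of $\omega_1$ satisfy $\langle \nabla\psi(\xi) - \nabla\psi(\zeta), \xi - \zeta\rangle \geq -\kappa\|\xi - \zeta\|^2$ for all $\xi, \zeta \in \omega_1$, with $0 \leq \kappa < \beta$. For $x \in \omega_0$, define $T(x) := \operatorname{argmin}_{\eta \in \omega_1} \big(h(\eta - x) + \psi(\eta)\big)$. Then $T$ is well defined (the minimizer is unique) and Hölder continuous with exponent $1/2$: specifically $(\beta - \kappa)\|T(x_1) - T(x_2)\|^2 \leq 2\,\mathrm{Lip}_{\omega_1 - \omega_0}(h)\,\|x_1 - x_2\|$ for all $x_1, x_2 \in \omega_0$. -/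

import Mathlib

open Set

/-- Existence, uniqueness and `1/2`-Hölder continuity of the map
`T(x) = argmin_{η ∈ ω₁} (h(η - x) + ψ(η))` when `h` is strongly convex with modulus `β`
on a bounded convex set `S ⊇ ω₁ - ω₀` and the gradient of `ψ` satisfies the curvature
bound `⟪∇ψ(ξ) - ∇ψ(ζ), ξ - ζ⟫ ≥ -κ ‖ξ - ζ‖²` on `ω₁` with `κ < β`:  the quantitative
estimate `(β - κ) ‖T(x₁) - T(x₂)‖² ≤ 2 Lip_{ω₁ - ω₀}(h) ‖x₁ - x₂‖` holds. -/
theorem stmt10 {d : ℕ} (ω₀ ω₁ S : Set (EuclideanSpace ℝ (Fin d)))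
    (hω₀ : IsCompact ω₀) (hω₁ : IsCompact ω₁) (hω₁c : Convex ℝ ω₁) (hω₁ne : ω₁.Nonempty)
    (hS : Convex ℝ S) (hSb : Bornology.IsBounded S)
    (hsub : ∀ ξ ∈ ω₁, ∀ x ∈ ω₀, ξ - x ∈ S)
    (h : EuclideanSpace ℝ (Fin d) → ℝ) (hconv : ConvexOn ℝ univ h)
    (β : ℝ) (hβ : 0 < β)
    (hstrong : ∀ x ∈ S, ∀ y ∈ S, ∀ t ∈ Icc (0:ℝ) 1,
      h (t • x + (1 - t) • y) ≤ t * h x + (1 - t) * h y - β / 2 * t * (1 - t) * ‖x - y‖ ^ 2)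
    (ψ : EuclideanSpace ℝ (Fin d) → ℝ) (gψ : EuclideanSpace ℝ (Fin d) → EuclideanSpace ℝ (Fin d))
    (hψ : ∀ ξ ∈ ω₁, HasGradientAt ψ (gψ ξ) ξ)
    (κ : ℝ) (hκ0 : 0 ≤ κ) (hκβ : κ < β)
    (hcurv : ∀ ξ ∈ ω₁, ∀ ζ ∈ ω₁, -κ * ‖ξ - ζ‖ ^ 2 ≤ (inner ℝ (gψ ξ - gψ ζ) (ξ - ζ) : ℝ))
    (Lh : ℝ) (hLip : ∀ a ∈ S, ∀ b ∈ S, |h a - h b| ≤ Lh * ‖a - b‖) :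
    -- the minimizer exists and is unique, so `T` is well defined
    (∀ x ∈ ω₀, ∃! ξ, ξ ∈ ω₁ ∧ ∀ η ∈ ω₁, h (ξ - x) + ψ ξ ≤ h (η - x) + ψ η) ∧
    -- quantitative 1/2-Hölder continuity of `T`
    (∀ x₁ ∈ ω₀, ∀ x₂ ∈ ω₀, ∀ ξ₁ ∈ ω₁, ∀ ξ₂ ∈ ω₁,
      (∀ η ∈ ω₁, h (ξ₁ - x₁) + ψ ξ₁ ≤ h (η - x₁) + ψ η) →
      (∀ η ∈ ω₁, h (ξ₂ - x₂) + ψ ξ₂ ≤ h (η - x₂) + ψ η) →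
      (β - κ) * ‖ξ₁ - ξ₂‖ ^ 2 ≤ 2 * Lh * ‖x₁ - x₂‖) := by
  have hβκ : 0 < β - κ := by linarith
  -- ψ satisfies a semiconvexity inequality along segments in ω₁
  have hψseg : ∀ ξ ∈ ω₁, ∀ ζ ∈ ω₁, ∀ t ∈ Icc (0:ℝ) 1,
      ψ (t • ξ + (1 - t) • ζ) ≤ t * ψ ξ + (1 - t) * ψ ζ + κ/2 * t * (1 - t) * ‖ξ - ζ‖ ^ 2 := by
    intro ξ hξ ζ hζ t ht
    set v := ξ - ζ with hv
    set σ := ‖ξ - ζ‖ ^ 2 with hσ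
    set p : ℝ → EuclideanSpace ℝ (Fin d) := fun s => ζ + s • v with hpdef
    have hpeq : ∀ s : ℝ, p s = s • ξ + (1 - s) • ζ := by
      intro s; simp only [hpdef, hv]; module
    have hp_mem : ∀ s ∈ Icc (0:ℝ) 1, p s ∈ ω₁ := by
      intro s hs
      rw [hpeq]
      exact hω₁c hξ hζ hs.1 (by linarith [hs.2]) (by ring)
    have hp_deriv : ∀ s : ℝ, HasDerivAt p v s := by
      intro s
      rw [hpdef]
      simpa using ((hasDerivAt_id s).smul_const v).const_add ζ
    set φ : ℝ → ℝ := fun s => ψ (p s) + κ/2 * σ * s ^ 2 with hφdef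
    have hφderiv : ∀ s ∈ Icc (0:ℝ) 1,
        HasDerivAt φ ((inner ℝ (gψ (p s)) v : ℝ) + κ * σ * s) s := by
      intro s hs
      have h1 : HasDerivAt (fun u => ψ (p u)) ((inner ℝ (gψ (p s)) v : ℝ)) s := by
        have := ((hψ _ (hp_mem s hs)).hasFDerivAt).comp_hasDerivAt s (hp_deriv s)
        exact this
      have h2 : HasDerivAt (fun u : ℝ => κ/2 * σ * u ^ 2) (κ * σ * s) s := by
        have := ((hasDerivAt_pow 2 s).const_mul (κ/2 * σ))
        refine this.congr_deriv ?_
        ring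
      exact h1.add h2
    have hφcont : ContinuousOn φ (Icc (0:ℝ) 1) := fun s hs =>
      ((hφderiv s hs).continuousAt).continuousWithinAt
    have hφdiff : DifferentiableOn ℝ φ (interior (Icc (0:ℝ) 1)) := by
      intro s hs
      rw [interior_Icc] at hs
      exact ((hφderiv s ⟨hs.1.le, hs.2.le⟩).differentiableAt).differentiableWithinAt
    have hφmono : MonotoneOn (deriv φ) (interior (Icc (0:ℝ) 1)) := by
      rw [interior_Icc]
      intro s hs u hu hsu
      rw [(hφderiv s ⟨hs.1.le, hs.2.le⟩).deriv, (hφderiv u ⟨hu.1.le, hu.2.le⟩).deriv]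
      have hmem_s := hp_mem s ⟨hs.1.le, hs.2.le⟩
      have hmem_u := hp_mem u ⟨hu.1.le, hu.2.le⟩
      have hc := hcurv (p u) hmem_u (p s) hmem_s
      have hps : p u - p s = (u - s) • v := by
        simp only [hpdef]; module
      rw [hps] at hc
      have hnv : ‖(u - s) • v‖ ^ 2 = (u - s) ^ 2 * σ := by
        rw [norm_smul, mul_pow, hσ, hv]
        simp [sq_abs]
      rw [hnv, inner_smul_right] at hc
      -- hc : -κ * ((u-s)^2 * σ) ≤ (u - s) * ⟪gψ (p u) - gψ (p s), v⟫
      rw [inner_sub_left] at hc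
      have hσ0 : (0:ℝ) ≤ σ := by positivity
      rcases eq_or_lt_of_le hsu with rfl | hlt
      · exact le_refl _
      · have hd : -κ * ((u - s) * σ) ≤ (inner ℝ (gψ (p u)) v : ℝ) - (inner ℝ (gψ (p s)) v : ℝ) := by
          have hus : 0 < u - s := by linarith
          nlinarith [hc]
        nlinarith [hd]
    have hφconv : ConvexOn ℝ (Icc (0:ℝ) 1) φ :=
      MonotoneOn.convexOn_of_deriv (convex_Icc 0 1) hφcont hφdiff hφmono
    have := hφconv.2 (right_mem_Icc.mpr zero_le_one) (left_mem_Icc.mpr zero_le_one)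
      ht.1 (by linarith [ht.2]) (by ring : t + (1 - t) = 1)
    simp only [smul_eq_mul, mul_one, mul_zero, add_zero] at this
    have hφt : φ t = ψ (p t) + κ/2 * σ * t ^ 2 := rfl
    have hp1 : p 1 = ξ := by simp only [hpdef, hv]; module
    have hp0 : p 0 = ζ := by simp only [hpdef]; module
    have hφ1 : φ 1 = ψ ξ + κ/2 * σ := by simp [hφdef, hp1]
    have hφ0 : φ 0 = ψ ζ := by simp [hφdef, hp0]
    rw [hφt, hφ1, hφ0] at this
    rw [← hpeq]
    calc ψ (p t) ≤ t * (ψ ξ + κ/2 * σ) + (1 - t) * ψ ζ - κ/2 * σ * t ^ 2 := by linarith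
      _ = t * ψ ξ + (1 - t) * ψ ζ + κ/2 * t * (1 - t) * σ := by ring
  -- combined strong convexity of η ↦ h (η - x) + ψ η on ω₁
  have hf : ∀ x ∈ ω₀, ∀ ξ ∈ ω₁, ∀ ζ ∈ ω₁, ∀ t ∈ Icc (0:ℝ) 1,
      h (t • ξ + (1 - t) • ζ - x) + ψ (t • ξ + (1 - t) • ζ) ≤
        t * (h (ξ - x) + ψ ξ) + (1 - t) * (h (ζ - x) + ψ ζ)
          - (β - κ)/2 * t * (1 - t) * ‖ξ - ζ‖ ^ 2 := by
    intro x hx ξ hξ ζ hζ t ht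
    have heq : t • ξ + (1 - t) • ζ - x = t • (ξ - x) + (1 - t) • (ζ - x) := by module
    have h1 := hstrong (ξ - x) (hsub ξ hξ x hx) (ζ - x) (hsub ζ hζ x hx) t ht
    rw [sub_sub_sub_cancel_right] at h1
    have h2 := hψseg ξ hξ ζ hζ t ht
    rw [heq]
    calc h (t • (ξ - x) + (1 - t) • (ζ - x)) + ψ (t • ξ + (1 - t) • ζ)
        ≤ (t * h (ξ - x) + (1 - t) * h (ζ - x) - β / 2 * t * (1 - t) * ‖ξ - ζ‖ ^ 2)
          + (t * ψ ξ + (1 - t) * ψ ζ + κ/2 * t * (1 - t) * ‖ξ - ζ‖ ^ 2) := add_le_add h1 h2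
      _ = t * (h (ξ - x) + ψ ξ) + (1 - t) * (h (ζ - x) + ψ ζ)
          - (β - κ)/2 * t * (1 - t) * ‖ξ - ζ‖ ^ 2 := by ring
  -- quadratic growth at a minimizer
  have hqg : ∀ x ∈ ω₀, ∀ ξ ∈ ω₁, (∀ η ∈ ω₁, h (ξ - x) + ψ ξ ≤ h (η - x) + ψ η) →
      ∀ η ∈ ω₁, h (ξ - x) + ψ ξ + (β - κ)/2 * ‖ξ - η‖ ^ 2 ≤ h (η - x) + ψ η := by
    intro x hx ξ hξ hmin η hη
    set σ := ‖ξ - η‖ ^ 2 with hσ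
    set A := h (η - x) + ψ η - (h (ξ - x) + ψ ξ) with hA
    have key : ∀ t ∈ Ico (0:ℝ) 1, (β - κ)/2 * t * σ ≤ A := by
      intro t ht
      have htIcc : t ∈ Icc (0:ℝ) 1 := ⟨ht.1, ht.2.le⟩
      have hmem : t • ξ + (1 - t) • η ∈ ω₁ :=
        hω₁c hξ hη ht.1 (by linarith [ht.2.le]) (by ring)
      have h1 := hmin _ hmem
      have h2 := hf x hx ξ hξ η hη t htIcc
      have h1t : 0 < 1 - t := by linarith [ht.2]
      have h3 : (1 - t) * ((β - κ)/2 * t * σ) ≤ (1 - t) * A := by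
        rw [hA, hσ]; nlinarith [h1, h2]
      exact le_of_mul_le_mul_left h3 h1t
    have htend : Filter.Tendsto (fun t : ℝ => (β - κ)/2 * t * σ) (nhdsWithin 1 (Iio 1))
        (nhds ((β - κ)/2 * 1 * σ)) := by
      apply Filter.Tendsto.mono_left _ nhdsWithin_le_nhds
      exact (Continuous.tendsto ((continuous_const.mul continuous_id).mul continuous_const) 1)
    have hev : ∀ᶠ t in nhdsWithin (1:ℝ) (Iio 1), (β - κ)/2 * t * σ ≤ A := by
      filter_upwards [Ioo_mem_nhdsLT_of_mem (⟨zero_lt_one, le_refl (1:ℝ)⟩ : (1:ℝ) ∈ Ioc (0:ℝ) 1)]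
        with t ht
      exact key t ⟨ht.1.le, ht.2⟩
    have : (β - κ)/2 * 1 * σ ≤ A := le_of_tendsto htend hev
    simp only [mul_one] at this
    linarith [this]
  constructor
  · -- existence and uniqueness
    intro x hx
    have hcont : ContinuousOn (fun η => h (η - x) + ψ η) ω₁ := by
      have hhcont : Continuous h := by
        rw [← continuousOn_univ]
        exact hconv.continuousOn isOpen_univ
      have hψcont : ContinuousOn ψ ω₁ := fun ξ hξ =>
        ((hψ ξ hξ).differentiableAt.continuousAt).continuousWithinAt
      exact ((hhcont.comp (continuous_id.sub continuous_const)).continuousOn).add hψcont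
    obtain ⟨ξ, hξ, hξmin⟩ := hω₁.exists_isMinOn hω₁ne hcont
    refine ⟨ξ, ⟨hξ, fun η hη => hξmin hη⟩, ?_⟩
    rintro ζ ⟨hζ, hζmin⟩
    have h1 := hqg x hx ξ hξ (fun η hη => hξmin hη) ζ hζ
    have h2 := hζmin ξ hξ
    have hσ0 : (β - κ)/2 * ‖ξ - ζ‖ ^ 2 ≤ 0 := by linarith
    have : ‖ξ - ζ‖ ^ 2 ≤ 0 := by nlinarith
    have : ξ - ζ = 0 := by
      have := sq_nonneg ‖ξ - ζ‖
      have hz : ‖ξ - ζ‖ ^ 2 = 0 := le_antisymm ‹‖ξ - ζ‖ ^ 2 ≤ 0› this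
      simpa [pow_eq_zero_iff] using hz
    have : ζ = ξ := by
      have := sub_eq_zero.mp this
      exact this.symm
    exact this
  · -- Hölder estimate
    intro x₁ hx₁ x₂ hx₂ ξ₁ hξ₁ ξ₂ hξ₂ hmin₁ hmin₂
    have h1 := hqg x₁ hx₁ ξ₁ hξ₁ hmin₁ ξ₂ hξ₂
    have h2 := hqg x₂ hx₂ ξ₂ hξ₂ hmin₂ ξ₁ hξ₁
    have hn : ‖ξ₂ - ξ₁‖ = ‖ξ₁ - ξ₂‖ := norm_sub_rev _ _
    rw [hn] at h2
    -- Lipschitz bounds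
    have hL1 : |h (ξ₂ - x₁) - h (ξ₂ - x₂)| ≤ Lh * ‖x₁ - x₂‖ := by
      have := hLip (ξ₂ - x₁) (hsub ξ₂ hξ₂ x₁ hx₁) (ξ₂ - x₂) (hsub ξ₂ hξ₂ x₂ hx₂)
      have he : ‖(ξ₂ - x₁) - (ξ₂ - x₂)‖ = ‖x₁ - x₂‖ := by
        rw [show (ξ₂ - x₁) - (ξ₂ - x₂) = -(x₁ - x₂) by module, norm_neg]
      rwa [he] at this
    have hL2 : |h (ξ₁ - x₂) - h (ξ₁ - x₁)| ≤ Lh * ‖x₁ - x₂‖ := by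
      have := hLip (ξ₁ - x₂) (hsub ξ₁ hξ₁ x₂ hx₂) (ξ₁ - x₁) (hsub ξ₁ hξ₁ x₁ hx₁)
      have he : ‖(ξ₁ - x₂) - (ξ₁ - x₁)‖ = ‖x₁ - x₂‖ := by
        rw [show (ξ₁ - x₂) - (ξ₁ - x₁) = x₁ - x₂ by module]
      rwa [he] at this
    have ha1 := abs_le.mp hL1
    have ha2 := abs_le.mp hL2
    nlinarith [h1, h2, ha1.2, ha2.2]
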